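/- arXiv:2505.11123 — 5 statements merged into one kernel-verified Lean document; each statement's English description precedes it below -/
import Mathlib

section
/- Let d be a positive integer, let Z be a measurable space with a probability measure q, and for a fixed generative condition c let p(·|z,c) be probability density functions on ℝ^d (measurable jointly in (x,z)) and u(·|z,c) : ℝ^d → ℝ^d bounded measurable conditional vector fields. Define the marginal density p(x|c) := ∫_Z p(x|z,c) dq(z) and assume p(x|c) > 0 for all x ∈ ℝ^d, and define the marginal vector field u(x|c) := (∫_Z u(x|z,c) p(x|z,c) dq(z)) / p(x|c). Then for every bounded measurable vector field v : ℝ^d → ℝ^d, the difference ∫_{ℝ^d} ‖v(x) − u(x|c)‖² p(x|c) dx − ∫_Z ∫_{ℝ^d} ‖v(x) − u(x|z,c)‖² p(x|z,c) dx dq(z) equals ∫_{ℝ^d} ‖u(x|c)‖² p(x|c) dx − ∫_Z ∫_{ℝ^d} ‖u(x|z,c)‖² p(x|z,c) dx dq(z); in particular, the marginal flow-matching objective and the conditional flow-matching objective differ by a constant that does not depend on the vector field v (hence not on the network parameters θ). -/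
/-!
Expanding the squares, `‖v - w‖² - ‖w‖² = ‖v‖² - 2⟪v, w⟫` is affine in `w`. Hence, for fixed `x`,
averaging `(‖v x - u x z‖² - ‖u x z‖²) p x z` over `z ∼ q` only sees the `p`-weighted mean of
`u x ·`, which is `p(x|c) • u(x|c)`; this gives `(‖v x - u(x|c)‖² - ‖u(x|c)‖²) p(x|c)`. Integrating
over `x` and exchanging the two integrals by Fubini (everything is dominated by a constant times
the integrable density `(x, z) ↦ p x z`) yields the identity.
-/

open MeasureTheory Function
open scoped RealInnerProductSpace

section

variable {X Z E : Type*} [MeasurableSpace X] [MeasurableSpace Z] {μ : Measure X} {q : Measure Z}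
  [NormedAddCommGroup E]

theorem integrable_uncurry_of_integral_eq_one [SFinite μ] [IsFiniteMeasure q] {p : X → Z → ℝ}
    (hp_meas : Measurable (uncurry p)) (hp_nonneg : ∀ x z, 0 ≤ p x z)
    (hp_prob : ∀ z, ∫ x, p x z ∂μ = 1) : Integrable (uncurry p) (μ.prod q) := by
  refine (integrable_prod_iff' hp_meas.aestronglyMeasurable).2
    ⟨.of_forall fun z => integrable_of_integral_eq_one (hp_prob z), ?_⟩
  simp [Real.norm_of_nonneg (hp_nonneg _ _), hp_prob]

theorem MeasureTheory.Integrable.norm_sq_mul {P : X → ℝ} {f : X → E} {C : ℝ} (hP : Integrable P μ)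
    (hf : AEStronglyMeasurable f μ) (hC : ∀ x, ‖f x‖ ≤ C) :
    Integrable (fun x => ‖f x‖ ^ 2 * P x) μ :=
  hP.bdd_mul (c := C ^ 2) (hf.norm.pow 2)
    (.of_forall fun x => by simpa using pow_le_pow_left₀ (norm_nonneg _) (hC x) 2)

theorem norm_le_of_integral_smul_eq_integral_smul [NormedSpace ℝ E] {P : Z → ℝ} {w : Z → E}
    {m : E} {C : ℝ}
    (hP : Integrable P q) (hP_nonneg : ∀ z, 0 ≤ P z) (hP_pos : 0 < ∫ z, P z ∂q)
    (hw : ∀ z, ‖w z‖ ≤ C) (hm : (∫ z, P z ∂q) • m = ∫ z, P z • w z ∂q) : ‖m‖ ≤ C := by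
  refine le_of_mul_le_mul_left ?_ hP_pos
  calc (∫ z, P z ∂q) * ‖m‖ = ‖∫ z, P z • w z ∂q‖ := by
        rw [← hm, norm_smul, Real.norm_of_nonneg hP_pos.le]
    _ ≤ ∫ z, C * P z ∂q := by
        refine norm_integral_le_of_norm_le (hP.const_mul C) (.of_forall fun z => ?_)
        rw [norm_smul, Real.norm_of_nonneg (hP_nonneg z), mul_comm]
        exact mul_le_mul_of_nonneg_right (hw z) (hP_nonneg z)
    _ = (∫ z, P z ∂q) * C := by rw [integral_const_mul, mul_comm]

theorem integral_norm_sub_sq_mul_sub_norm_sq_mul [InnerProductSpace ℝ E] [CompleteSpace E]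
    {P : Z → ℝ} {w : Z → E}
    (hP : Integrable P q) (hPw : Integrable (fun z => P z • w z) q) (v m : E)
    (hm : (∫ z, P z ∂q) • m = ∫ z, P z • w z ∂q) :
    ∫ z, (‖v - w z‖ ^ 2 * P z - ‖w z‖ ^ 2 * P z) ∂q
      = ‖v - m‖ ^ 2 * ∫ z, P z ∂q - ‖m‖ ^ 2 * ∫ z, P z ∂q := by
  have expand : ∀ z, ‖v - w z‖ ^ 2 * P z - ‖w z‖ ^ 2 * P z
      = ‖v‖ ^ 2 * P z - 2 * ⟪v, P z • w z⟫ := fun z => by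
    rw [norm_sub_sq_real, real_inner_smul_right]; ring
  simp_rw [expand]
  rw [integral_sub (hP.const_mul _) ((hPw.const_inner v).const_mul 2), integral_const_mul,
    integral_const_mul, integral_inner hPw, ← hm, real_inner_smul_right, norm_sub_sq_real]
  ring

theorem integral_integral_sub_swap [SFinite μ] [SFinite q] {F G : X → Z → ℝ}
    (hF : Integrable (uncurry F) (μ.prod q)) (hG : Integrable (uncurry G) (μ.prod q)) :
    ∫ x, ∫ z, (F x z - G x z) ∂q ∂μ = ∫ z, ∫ x, F x z ∂μ ∂q - ∫ z, ∫ x, G x z ∂μ ∂q :=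
  calc ∫ x, ∫ z, (F x z - G x z) ∂q ∂μ
      = ∫ xz, (uncurry F xz - uncurry G xz) ∂μ.prod q := integral_integral (hF.sub hG)
    _ = ∫ xz, uncurry F xz ∂μ.prod q - ∫ xz, uncurry G xz ∂μ.prod q := integral_sub hF hG
    _ = _ := by rw [integral_prod_symm _ hF, integral_prod_symm _ hG]; rfl

end

theorem marginal_and_conditional_fm_objectives_differ_by_constant_general
    (d : ℕ)
    {Z : Type*} [MeasurableSpace Z] (q : Measure Z) [IsProbabilityMeasure q]
    (p : EuclideanSpace ℝ (Fin d) → Z → ℝ)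
    (hp_meas : Measurable fun xz : EuclideanSpace ℝ (Fin d) × Z => p xz.1 xz.2)
    (hp_nonneg : ∀ x z, 0 ≤ p x z)
    (hp_prob : ∀ z, ∫ x : EuclideanSpace ℝ (Fin d), p x z = 1)
    (u : EuclideanSpace ℝ (Fin d) → Z → EuclideanSpace ℝ (Fin d))
    (hu_meas : Measurable fun xz : EuclideanSpace ℝ (Fin d) × Z => u xz.1 xz.2)
    (Cu : ℝ) (hu_bdd : ∀ x z, ‖u x z‖ ≤ Cu)
    (pbar : EuclideanSpace ℝ (Fin d) → ℝ)
    (hpbar : ∀ x, pbar x = ∫ z, p x z ∂q)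
    (hpbar_pos : ∀ x, 0 < pbar x)
    (ubar : EuclideanSpace ℝ (Fin d) → EuclideanSpace ℝ (Fin d))
    (hubar : ∀ x, ubar x = (pbar x)⁻¹ • ∫ z, p x z • u x z ∂q)
    (v : EuclideanSpace ℝ (Fin d) → EuclideanSpace ℝ (Fin d))
    (hv_meas : Measurable v)
    (Cv : ℝ) (hv_bdd : ∀ x, ‖v x‖ ≤ Cv) :
    (∫ x : EuclideanSpace ℝ (Fin d), ‖v x - ubar x‖ ^ 2 * pbar x)
      - (∫ z, (∫ x : EuclideanSpace ℝ (Fin d), ‖v x - u x z‖ ^ 2 * p x z) ∂q)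
    = (∫ x : EuclideanSpace ℝ (Fin d), ‖ubar x‖ ^ 2 * pbar x)
      - (∫ z, (∫ x : EuclideanSpace ℝ (Fin d), ‖u x z‖ ^ 2 * p x z) ∂q) := by
  have hp_int := integrable_uncurry_of_integral_eq_one (q := q) hp_meas hp_nonneg hp_prob
  have hpbar_int : Integrable pbar := by rw [funext hpbar]; exact hp_int.integral_prod_left
  have hpbar_meas : Measurable pbar := by
    rw [funext hpbar]; exact hp_meas.stronglyMeasurable.integral_prod_right'.measurable
  have hpx_int (x) : Integrable (p x) q := .of_integral_ne_zero (hpbar x ▸ (hpbar_pos x).ne')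
  have hpu_int (x) : Integrable (fun z => p x z • u x z) q :=
    (hpx_int x).smul_bdd Cu (hu_meas.comp measurable_prodMk_left).aestronglyMeasurable
      (.of_forall (hu_bdd x))
  have hmean (x) : (∫ z, p x z ∂q) • ubar x = ∫ z, p x z • u x z ∂q := by
    rw [← hpbar, hubar x, smul_inv_smul₀ (hpbar_pos x).ne']
  have hubar_bdd (x) : ‖ubar x‖ ≤ Cu := norm_le_of_integral_smul_eq_integral_smul (hpx_int x)
    (hp_nonneg x) (hpbar x ▸ hpbar_pos x) (hu_bdd x) (hmean x)
  have hubar_meas : Measurable ubar := by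
    rw [funext hubar]
    exact hpbar_meas.inv.smul
      (hp_meas.smul hu_meas).stronglyMeasurable.integral_prod_right'.measurable
  have hF : Integrable (uncurry fun x z => ‖v x - u x z‖ ^ 2 * p x z) (volume.prod q) :=
    hp_int.norm_sq_mul ((hv_meas.comp measurable_fst).sub hu_meas).aestronglyMeasurable
      fun xz => (norm_sub_le _ _).trans (add_le_add (hv_bdd _) (hu_bdd _ _))
  have hG : Integrable (uncurry fun x z => ‖u x z‖ ^ 2 * p x z) (volume.prod q) :=
    hp_int.norm_sq_mul hu_meas.aestronglyMeasurable fun xz => hu_bdd _ _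
  have hFbar : Integrable (fun x => ‖v x - ubar x‖ ^ 2 * pbar x) :=
    hpbar_int.norm_sq_mul (hv_meas.sub hubar_meas).aestronglyMeasurable
      fun x => (norm_sub_le _ _).trans (add_le_add (hv_bdd x) (hubar_bdd x))
  have hGbar : Integrable (fun x => ‖ubar x‖ ^ 2 * pbar x) :=
    hpbar_int.norm_sq_mul hubar_meas.aestronglyMeasurable hubar_bdd
  have fubini := integral_integral_sub_swap hF hG
  simp_rw [integral_norm_sub_sq_mul_sub_norm_sq_mul (hpx_int _) (hpu_int _) _ _ (hmean _),
    ← hpbar, integral_sub hFbar hGbar] at fubini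
  linarith

/-- **Lemma 1 of the paper.** For a fixed generative condition `c`,
let `p(·|z,c)` be probability densities on `ℝ^d` (jointly measurable) and
`u(·|z,c)` bounded measurable conditional vector fields, mixed by a probability
measure `q` on `Z`.  With the marginal density `p(x|c) = ∫_Z p(x|z,c) dq(z)`
(assumed strictly positive) and the marginal vector field
`u(x|c) = (∫_Z u(x|z,c) p(x|z,c) dq(z)) / p(x|c)`, for every bounded measurable
vector field `v` the marginal and conditional flow-matching objectives differ by
a constant independent of `v`:
`∫ ‖v − u(·|c)‖² p(·|c) − ∫∫ ‖v − u(·|z,c)‖² p(·|z,c) dq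
  = ∫ ‖u(·|c)‖² p(·|c) − ∫∫ ‖u(·|z,c)‖² p(·|z,c) dq`. -/
theorem marginal_and_conditional_fm_objectives_differ_by_constant
    (d : ℕ) (hd : 0 < d)
    {Z : Type*} [MeasurableSpace Z] (q : Measure Z) [IsProbabilityMeasure q]
    (p : EuclideanSpace ℝ (Fin d) → Z → ℝ)
    (hp_meas : Measurable fun xz : EuclideanSpace ℝ (Fin d) × Z => p xz.1 xz.2)
    (hp_nonneg : ∀ x z, 0 ≤ p x z)
    (hp_prob : ∀ z, ∫ x : EuclideanSpace ℝ (Fin d), p x z = 1)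
    (u : EuclideanSpace ℝ (Fin d) → Z → EuclideanSpace ℝ (Fin d))
    (hu_meas : Measurable fun xz : EuclideanSpace ℝ (Fin d) × Z => u xz.1 xz.2)
    (Cu : ℝ) (hu_bdd : ∀ x z, ‖u x z‖ ≤ Cu)
    (pbar : EuclideanSpace ℝ (Fin d) → ℝ)
    (hpbar : ∀ x, pbar x = ∫ z, p x z ∂q)
    (hpbar_pos : ∀ x, 0 < pbar x)
    (ubar : EuclideanSpace ℝ (Fin d) → EuclideanSpace ℝ (Fin d))
    (hubar : ∀ x, ubar x = (pbar x)⁻¹ • ∫ z, p x z • u x z ∂q)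
    (v : EuclideanSpace ℝ (Fin d) → EuclideanSpace ℝ (Fin d))
    (hv_meas : Measurable v)
    (Cv : ℝ) (hv_bdd : ∀ x, ‖v x‖ ≤ Cv) :
    (∫ x : EuclideanSpace ℝ (Fin d), ‖v x - ubar x‖ ^ 2 * pbar x)
      - (∫ z, (∫ x : EuclideanSpace ℝ (Fin d), ‖v x - u x z‖ ^ 2 * p x z) ∂q)
    = (∫ x : EuclideanSpace ℝ (Fin d), ‖ubar x‖ ^ 2 * pbar x)
      - (∫ z, (∫ x : EuclideanSpace ℝ (Fin d), ‖u x z‖ ^ 2 * p x z) ∂q) :=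
  marginal_and_conditional_fm_objectives_differ_by_constant_general d q p hp_meas hp_nonneg hp_prob
    u hu_meas Cu hu_bdd pbar hpbar hpbar_pos ubar hubar v hv_meas Cv hv_bdd
end

section
/- Let d be a positive integer, let Z be a measurable space with a probability measure q, let p(·|z) be probability density functions on ℝ^d (measurable jointly in (x,z)), and let u(·|z) : ℝ^d → ℝ^d be bounded measurable conditional vector fields. Define the marginal density p(x) := ∫_Z p(x|z) dq(z), assume p(x) > 0 for all x, and define the marginal vector field u(x) := (∫_Z u(x|z) p(x|z) dq(z)) / p(x). Then for every bounded measurable vector field v : ℝ^d → ℝ^d, ∫_{ℝ^d} ⟨v(x), u(x)⟩ p(x) dx = ∫_Z ∫_{ℝ^d} ⟨v(x), u(x|z)⟩ p(x|z) dx dq(z). -/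
/-!
Pointwise in `x`, the inner product commutes with the Bochner integral over `z`, so
`⟪v x, ubar x⟫ * pbar x = ∫ ⟪v x, u x z⟫ * p x z dq`; integrating in `x` and swapping the
integrals (Fubini) gives the claim. Fubini applies because the integrand is bounded by
`Cv * Cu * p x z`, and `p` is integrable on the product since each `p(·|z)` has mass one and `q`
is finite.
-/

open MeasureTheory

section

variable {X Z : Type*} [MeasurableSpace X] [MeasurableSpace Z] {μ : Measure X} {q : Measure Z}

theorem integrable_prod_of_forall_integral_eq_one [SFinite μ] [IsFiniteMeasure q] {p : X → Z → ℝ}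
    (hp_meas : AEStronglyMeasurable (fun xz : X × Z => p xz.1 xz.2) (μ.prod q))
    (hp_nonneg : ∀ x z, 0 ≤ p x z) (hp_prob : ∀ z, ∫ x, p x z ∂μ = 1) :
    Integrable (fun xz : X × Z => p xz.1 xz.2) (μ.prod q) := by
  have hslice : ∀ z, Integrable (fun x => p x z) μ := fun z =>
    Integrable.of_integral_ne_zero (by rw [hp_prob z]; exact one_ne_zero)
  refine (integrable_prod_iff' hp_meas).2 ⟨ae_of_all _ hslice, ?_⟩
  simp only [Real.norm_of_nonneg (hp_nonneg _ _), hp_prob]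
  exact integrable_const 1

theorem inner_integral_smul {E : Type*} [NormedAddCommGroup E] [InnerProductSpace ℝ E]
    [CompleteSpace E] (w : E) {p : Z → ℝ} {u : Z → E} (hpu : Integrable (fun z => p z • u z) q) :
    inner ℝ w (∫ z, p z • u z ∂q) = ∫ z, inner ℝ w (u z) * p z ∂q := by
  rw [← integral_inner hpu]
  simp only [inner_smul_right, mul_comm]

end

theorem inner_product_marginalization_general
    (d : ℕ)
    {Z : Type*} [MeasurableSpace Z] (q : Measure Z) [IsProbabilityMeasure q]
    (p : EuclideanSpace ℝ (Fin d) → Z → ℝ)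
    (hp_meas : Measurable fun xz : EuclideanSpace ℝ (Fin d) × Z => p xz.1 xz.2)
    (hp_nonneg : ∀ x z, 0 ≤ p x z)
    (hp_prob : ∀ z, ∫ x : EuclideanSpace ℝ (Fin d), p x z = 1)
    (u : EuclideanSpace ℝ (Fin d) → Z → EuclideanSpace ℝ (Fin d))
    (hu_meas : Measurable fun xz : EuclideanSpace ℝ (Fin d) × Z => u xz.1 xz.2)
    (Cu : ℝ) (hu_bdd : ∀ x z, ‖u x z‖ ≤ Cu)
    (pbar : EuclideanSpace ℝ (Fin d) → ℝ)
    (hpbar : ∀ x, pbar x = ∫ z, p x z ∂q)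
    (hpbar_pos : ∀ x, 0 < pbar x)
    (ubar : EuclideanSpace ℝ (Fin d) → EuclideanSpace ℝ (Fin d))
    (hubar : ∀ x, ubar x = (pbar x)⁻¹ • ∫ z, p x z • u x z ∂q)
    (v : EuclideanSpace ℝ (Fin d) → EuclideanSpace ℝ (Fin d))
    (hv_meas : Measurable v)
    (Cv : ℝ) (hv_bdd : ∀ x, ‖v x‖ ≤ Cv) :
    (∫ x : EuclideanSpace ℝ (Fin d), (inner ℝ (v x) (ubar x) : ℝ) * pbar x)
      = (∫ z, (∫ x : EuclideanSpace ℝ (Fin d), (inner ℝ (v x) (u x z) : ℝ) * p x z) ∂q) := by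
  have hpu_int : ∀ x, Integrable (fun z => p x z • u x z) q := fun x =>
    (Integrable.of_integral_ne_zero (hpbar x ▸ (hpbar_pos x).ne')).smul_bdd Cu
      (hu_meas.comp measurable_prodMk_left).aestronglyMeasurable (ae_of_all _ (hu_bdd x))
  have hpointwise : ∀ x, inner ℝ (v x) (ubar x) * pbar x = ∫ z, inner ℝ (v x) (u x z) * p x z ∂q :=
    fun x => by
      rw [hubar x, inner_smul_right, mul_right_comm, inv_mul_cancel₀ (hpbar_pos x).ne', one_mul,
        inner_integral_smul _ (hpu_int x)]
  have hCv : 0 ≤ Cv := (norm_nonneg _).trans (hv_bdd 0)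
  have hintegrand : Integrable (fun xz : EuclideanSpace ℝ (Fin d) × Z =>
      inner ℝ (v xz.1) (u xz.1 xz.2) * p xz.1 xz.2) (volume.prod q) :=
    (integrable_prod_of_forall_integral_eq_one hp_meas.aestronglyMeasurable hp_nonneg hp_prob).bdd_mul
      ((hv_meas.comp measurable_fst).inner hu_meas).aestronglyMeasurable
      (ae_of_all _ fun xz => (norm_inner_le_norm _ _).trans
        (mul_le_mul (hv_bdd _) (hu_bdd _ _) (norm_nonneg _) hCv))
  rw [integral_congr_ae (ae_of_all _ hpointwise)]
  exact integral_integral_swap hintegrand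

/-- With conditional probability densities `p(·|z)` on `ℝ^d`,
bounded measurable conditional vector fields `u(·|z)`, mixing probability
measure `q`, marginal density `p(x) = ∫_Z p(x|z) dq(z)` assumed strictly
positive, and marginal vector field `u(x) = (∫_Z u(x|z) p(x|z) dq(z)) / p(x)`,
for every bounded measurable vector field `v` one has
`∫ ⟨v(x), u(x)⟩ p(x) dx = ∫_Z ∫ ⟨v(x), u(x|z)⟩ p(x|z) dx dq(z)`. -/
theorem inner_product_marginalization
    (d : ℕ) (hd : 0 < d)
    {Z : Type*} [MeasurableSpace Z] (q : Measure Z) [IsProbabilityMeasure q]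
    (p : EuclideanSpace ℝ (Fin d) → Z → ℝ)
    (hp_meas : Measurable fun xz : EuclideanSpace ℝ (Fin d) × Z => p xz.1 xz.2)
    (hp_nonneg : ∀ x z, 0 ≤ p x z)
    (hp_prob : ∀ z, ∫ x : EuclideanSpace ℝ (Fin d), p x z = 1)
    (u : EuclideanSpace ℝ (Fin d) → Z → EuclideanSpace ℝ (Fin d))
    (hu_meas : Measurable fun xz : EuclideanSpace ℝ (Fin d) × Z => u xz.1 xz.2)
    (Cu : ℝ) (hu_bdd : ∀ x z, ‖u x z‖ ≤ Cu)
    (pbar : EuclideanSpace ℝ (Fin d) → ℝ)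
    (hpbar : ∀ x, pbar x = ∫ z, p x z ∂q)
    (hpbar_pos : ∀ x, 0 < pbar x)
    (ubar : EuclideanSpace ℝ (Fin d) → EuclideanSpace ℝ (Fin d))
    (hubar : ∀ x, ubar x = (pbar x)⁻¹ • ∫ z, p x z • u x z ∂q)
    (v : EuclideanSpace ℝ (Fin d) → EuclideanSpace ℝ (Fin d))
    (hv_meas : Measurable v)
    (Cv : ℝ) (hv_bdd : ∀ x, ‖v x‖ ≤ Cv) :
    (∫ x : EuclideanSpace ℝ (Fin d), (inner ℝ (v x) (ubar x) : ℝ) * pbar x)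
      = (∫ z, (∫ x : EuclideanSpace ℝ (Fin d), (inner ℝ (v x) (u x z) : ℝ) * p x z) ∂q) :=
  inner_product_marginalization_general d q p hp_meas hp_nonneg hp_prob u hu_meas Cu hu_bdd pbar
    hpbar hpbar_pos ubar hubar v hv_meas Cv hv_bdd
end

section
/- Let p and d be positive integers, let μ be a probability measure on a measurable space Y, and let u : Y → ℝ^d be a bounded measurable function. Let c₁, c₂ be two conditions and, for i ∈ {1,2}, let vᵢ : Y → ℝ^d and Dᵢ : Y → (ℝ^p → ℝ^d continuous linear maps) be measurable, interpreted as the velocity estimator and its parameter-Jacobian at a fixed parameter θ under condition cᵢ. Suppose there are nonnegative constants M, D, K, ε such that for all y ∈ Y and i ∈ {1,2}: ‖Dᵢ(y)‖ ≤ M (operator norm), ‖vᵢ(y) − u(y)‖ ≤ D, ‖v₁(y) − v₂(y)‖ ≤ ε, and ‖D₁(y) − D₂(y)‖ ≤ K ‖v₁(y) − v₂(y)‖. Define the loss gradients Gᵢ := 2 ∫_Y (Dᵢ(y))^* (vᵢ(y) − u(y)) dμ(y) ∈ ℝ^p, where (·)^* is the Euclidean adjoint. Then ‖G₁ − G₂‖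 ≤ 2 (M + K·D) ε. -/
/-! The two gradient integrands differ pointwise by
`D₁* (v₁ - v₂) + (D₁ - D₂)* (v₂ - u)`, whose norm is at most `M ε + K ε D`, since the adjoint is
an isometry. Averaging against the probability measure `μ` keeps this bound. -/

open MeasureTheory

namespace ContinuousLinearMap

theorem norm_apply_sub_apply_le {𝕜 E F : Type*} [NontriviallyNormedField 𝕜]
    [SeminormedAddCommGroup E] [NormedSpace 𝕜 E] [SeminormedAddCommGroup F] [NormedSpace 𝕜 F]
    (A₁ A₂ : E →L[𝕜] F) (x₁ x₂ : E) :
    ‖A₁ x₁ - A₂ x₂‖ ≤ ‖A₁‖ * ‖x₁ - x₂‖ + ‖A₁ - A₂‖ * ‖x₂‖ := by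
  have hsplit : A₁ x₁ - A₂ x₂ = A₁ (x₁ - x₂) + (A₁ - A₂) x₂ := by
    simp only [map_sub, sub_apply]; abel
  rw [hsplit]
  exact (norm_add_le _ _).trans (add_le_add (le_opNorm _ _) (le_opNorm _ _))

variable {𝕜 E F : Type*} [RCLike 𝕜] [NormedAddCommGroup E] [InnerProductSpace 𝕜 E]
  [CompleteSpace E] [NormedAddCommGroup F] [InnerProductSpace 𝕜 F] [CompleteSpace F]

theorem norm_adjoint_apply_sub_adjoint_apply_le (A₁ A₂ : E →L[𝕜] F) (x₁ x₂ : F) :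
    ‖adjoint A₁ x₁ - adjoint A₂ x₂‖ ≤ ‖A₁‖ * ‖x₁ - x₂‖ + ‖A₁ - A₂‖ * ‖x₂‖ := by
  simpa only [← map_sub, LinearIsometryEquiv.norm_map] using
    norm_apply_sub_apply_le (adjoint A₁) (adjoint A₂) x₁ x₂

theorem norm_adjoint_apply_residual_sub_le {A₁ A₂ : E →L[𝕜] F} {v₁ v₂ u : F} {M D K ε : ℝ}
    (hK : 0 ≤ K) (hA₁ : ‖A₁‖ ≤ M) (hres₂ : ‖v₂ - u‖ ≤ D) (hclose : ‖v₁ - v₂‖ ≤ ε)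
    (hLip : ‖A₁ - A₂‖ ≤ K * ‖v₁ - v₂‖) :
    ‖adjoint A₁ (v₁ - u) - adjoint A₂ (v₂ - u)‖ ≤ (M + K * D) * ε := by
  have hA : ‖A₁ - A₂‖ ≤ K * ε := hLip.trans (mul_le_mul_of_nonneg_left hclose hK)
  calc ‖adjoint A₁ (v₁ - u) - adjoint A₂ (v₂ - u)‖
      ≤ ‖A₁‖ * ‖v₁ - v₂‖ + ‖A₁ - A₂‖ * ‖v₂ - u‖ := by
        simpa only [sub_sub_sub_cancel_right] using
          norm_adjoint_apply_sub_adjoint_apply_le A₁ A₂ (v₁ - u) (v₂ - u)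
    _ ≤ M * ε + K * ε * D :=
        add_le_add (mul_le_mul hA₁ hclose (norm_nonneg _) ((norm_nonneg _).trans hA₁))
          (mul_le_mul hA hres₂ (norm_nonneg _) ((norm_nonneg _).trans hA))
    _ = (M + K * D) * ε := by ring

theorem integrable_adjoint_apply {Y : Type*} [MeasurableSpace Y] {μ : Measure Y}
    [IsFiniteMeasure μ] {A : Y → E →L[𝕜] F} {r : Y → F}
    (hA : AEStronglyMeasurable A μ) (hr : AEStronglyMeasurable r μ) {M D : ℝ}
    (hAM : ∀ᵐ y ∂μ, ‖A y‖ ≤ M) (hrD : ∀ᵐ y ∂μ, ‖r y‖ ≤ D) :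
    Integrable (fun y => adjoint (A y) (r y)) μ := by
  have hA' : AEStronglyMeasurable (fun y => adjoint (A y)) μ :=
    (LinearIsometryEquiv.continuous _).comp_aestronglyMeasurable hA
  refine Integrable.of_bound
    (isBoundedBilinearMap_apply.continuous.comp_aestronglyMeasurable (hA'.prodMk hr)) (M * D) ?_
  filter_upwards [hAM, hrD] with y hAy hry
  calc ‖adjoint (A y) (r y)‖ ≤ ‖A y‖ * ‖r y‖ := by
        simpa only [LinearIsometryEquiv.norm_map] using (adjoint (A y)).le_opNorm (r y)
    _ ≤ M * D := mul_le_mul hAy hry (norm_nonneg _) ((norm_nonneg _).trans hAy)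

end ContinuousLinearMap

theorem MeasureTheory.norm_integral_sub_integral_le {Y G : Type*} [MeasurableSpace Y]
    {μ : Measure Y} [IsProbabilityMeasure μ] [NormedAddCommGroup G] [NormedSpace ℝ G]
    {f g : Y → G} (hf : Integrable f μ) (hg : Integrable g μ) {C : ℝ}
    (h : ∀ᵐ y ∂μ, ‖f y - g y‖ ≤ C) :
    ‖∫ y, f y ∂μ - ∫ y, g y ∂μ‖ ≤ C := by
  simpa only [← integral_sub hf hg, probReal_univ, mul_one] using
    norm_integral_le_of_norm_le_const h

theorem gradient_contraction_under_independent_sampling_general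
    (p d : ℕ)
    {Y : Type*} [MeasurableSpace Y] (μ : Measure Y) [IsProbabilityMeasure μ]
    (u : Y → EuclideanSpace ℝ (Fin d))
    (hu_meas : Measurable u)
    (v₁ v₂ : Y → EuclideanSpace ℝ (Fin d))
    (D₁ D₂ : Y → (EuclideanSpace ℝ (Fin p) →L[ℝ] EuclideanSpace ℝ (Fin d)))
    (hv₁_meas : Measurable v₁) (hv₂_meas : Measurable v₂)
    (hD₁_meas : StronglyMeasurable D₁) (hD₂_meas : StronglyMeasurable D₂)
    (M D K ε : ℝ) (hK : 0 ≤ K)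
    (hD₁_bdd : ∀ y, ‖D₁ y‖ ≤ M) (hD₂_bdd : ∀ y, ‖D₂ y‖ ≤ M)
    (hres₁ : ∀ y, ‖v₁ y - u y‖ ≤ D) (hres₂ : ∀ y, ‖v₂ y - u y‖ ≤ D)
    (hclose : ∀ y, ‖v₁ y - v₂ y‖ ≤ ε)
    (hLip : ∀ y, ‖D₁ y - D₂ y‖ ≤ K * ‖v₁ y - v₂ y‖) :
    ‖((2 : ℝ) • ∫ y, (ContinuousLinearMap.adjoint (D₁ y)) (v₁ y - u y) ∂μ)
      - ((2 : ℝ) • ∫ y, (ContinuousLinearMap.adjoint (D₂ y)) (v₂ y - u y) ∂μ)‖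
      ≤ 2 * (M + K * D) * ε := by
  have hint₁ := ContinuousLinearMap.integrable_adjoint_apply (μ := μ)
    hD₁_meas.aestronglyMeasurable (hv₁_meas.sub hu_meas).aestronglyMeasurable
    (ae_of_all _ hD₁_bdd) (ae_of_all _ hres₁)
  have hint₂ := ContinuousLinearMap.integrable_adjoint_apply (μ := μ)
    hD₂_meas.aestronglyMeasurable (hv₂_meas.sub hu_meas).aestronglyMeasurable
    (ae_of_all _ hD₂_bdd) (ae_of_all _ hres₂)
  have hbound := norm_integral_sub_integral_le hint₁ hint₂ <| ae_of_all _ fun y =>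
    ContinuousLinearMap.norm_adjoint_apply_residual_sub_le hK (hD₁_bdd y) (hres₂ y)
      (hclose y) (hLip y)
  rw [← smul_sub, norm_smul, Real.norm_two, mul_assoc]
  exact mul_le_mul_of_nonneg_left hbound zero_le_two

/-- **Theorem 2 of the paper, gradient contraction under
independent sampling.** For two conditions `c₁, c₂`, with velocity estimators
`v₁, v₂ : Y → ℝ^d` and parameter-Jacobians `D₁, D₂ : Y → (ℝ^p →L ℝ^d)` at a
fixed parameter, under the uniform bounds `‖Dᵢ(y)‖ ≤ M`, `‖vᵢ(y) − u(y)‖ ≤ D`,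
`‖v₁(y) − v₂(y)‖ ≤ ε` and the output-sensitive Lipschitz condition
`‖D₁(y) − D₂(y)‖ ≤ K ‖v₁(y) − v₂(y)‖`, the loss gradients
`Gᵢ = 2 ∫ (Dᵢ(y))^* (vᵢ(y) − u(y)) dμ(y)` satisfy
`‖G₁ − G₂‖ ≤ 2 (M + K·D) ε`. -/
theorem gradient_contraction_under_independent_sampling
    (p d : ℕ) (hp : 0 < p) (hd : 0 < d)
    {Y : Type*} [MeasurableSpace Y] (μ : Measure Y) [IsProbabilityMeasure μ]
    (u : Y → EuclideanSpace ℝ (Fin d))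
    (hu_meas : Measurable u)
    (Cu : ℝ) (hu_bdd : ∀ y, ‖u y‖ ≤ Cu)
    (v₁ v₂ : Y → EuclideanSpace ℝ (Fin d))
    (D₁ D₂ : Y → (EuclideanSpace ℝ (Fin p) →L[ℝ] EuclideanSpace ℝ (Fin d)))
    (hv₁_meas : Measurable v₁) (hv₂_meas : Measurable v₂)
    (hD₁_meas : StronglyMeasurable D₁) (hD₂_meas : StronglyMeasurable D₂)
    (M D K ε : ℝ) (hM : 0 ≤ M) (hD : 0 ≤ D) (hK : 0 ≤ K) (hε : 0 ≤ ε)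
    (hD₁_bdd : ∀ y, ‖D₁ y‖ ≤ M) (hD₂_bdd : ∀ y, ‖D₂ y‖ ≤ M)
    (hres₁ : ∀ y, ‖v₁ y - u y‖ ≤ D) (hres₂ : ∀ y, ‖v₂ y - u y‖ ≤ D)
    (hclose : ∀ y, ‖v₁ y - v₂ y‖ ≤ ε)
    (hLip : ∀ y, ‖D₁ y - D₂ y‖ ≤ K * ‖v₁ y - v₂ y‖) :
    ‖((2 : ℝ) • ∫ y, (ContinuousLinearMap.adjoint (D₁ y)) (v₁ y - u y) ∂μ)
      - ((2 : ℝ) • ∫ y, (ContinuousLinearMap.adjoint (D₂ y)) (v₂ y - u y) ∂μ)‖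
      ≤ 2 * (M + K * D) * ε :=
  gradient_contraction_under_independent_sampling_general p d μ u hu_meas v₁ v₂ D₁ D₂ hv₁_meas
    hv₂_meas hD₁_meas hD₂_meas M D K ε hK hD₁_bdd hD₂_bdd hres₁ hres₂ hclose hLip
end

section
/- Let p and d be positive integers. For every B > 0 there exist: points a, b in ℝ^d, the Dirac probability measures μ₁ = δ_a and μ₂ = δ_b on ℝ^d, a bounded measurable target u : ℝ^d → ℝ^d, and a bounded measurable velocity estimator v : ℝ^d → ℝ^d with bounded measurable parameter-Jacobian Dv : ℝ^d → (ℝ^p → ℝ^d continuous linear maps) that is the same for both conditions (so the hypothesis ‖v(y,c₁) − v(y,c₂)‖ ≤ ε holds for every ε ≥ 0, in particular ε = 0), such that ‖G₁ − G₂‖ > B, where Gᵢ := 2 ∫ (Dv(y))^* (v(y) − u(y)) dμᵢ(y). Consequently, under condition-dependent sampling measures, no bound on the gradient difference depending only on ε (such as 2(M + K D)ε) can hold without additional coupling assumptions on the conditional source distribution. -/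
open MeasureTheory

/-!
Let both conditions share the Jacobian `Dv ≡ L` and the target `u ≡ 0`, and let `v` be the
indicator of `{a}` with value `w`. Against `δ_a` the gradient is `2 L^* w`, against `δ_b` it is
`0`, so the gradient gap is `2 ‖L^* w‖`; taking `L = M^*` for a rank-one `M` with `‖M w‖`
as large as we like settles the claim.
-/

noncomputable def lossGradient {X E F : Type*} [MeasurableSpace X]
    [NormedAddCommGroup E] [InnerProductSpace ℝ E] [CompleteSpace E]
    [NormedAddCommGroup F] [InnerProductSpace ℝ F] [CompleteSpace F]
    (μ : Measure X) (u v : X → E) (Dv : X → F →L[ℝ] E) : F :=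
  (2 : ℝ) • ∫ y, ContinuousLinearMap.adjoint (Dv y) (v y - u y) ∂μ

theorem lossGradient_dirac {X E F : Type*} [MeasurableSpace X] [MeasurableSingletonClass X]
    [NormedAddCommGroup E] [InnerProductSpace ℝ E] [CompleteSpace E]
    [NormedAddCommGroup F] [InnerProductSpace ℝ F] [CompleteSpace F]
    (u v : X → E) (Dv : X → F →L[ℝ] E) (a : X) :
    lossGradient (Measure.dirac a) u v Dv =
      (2 : ℝ) • ContinuousLinearMap.adjoint (Dv a) (v a - u a) := by
  rw [lossGradient, integral_dirac]

theorem exists_norm_apply_gt {E F : Type*} [NormedAddCommGroup E] [InnerProductSpace ℝ E]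
    [Nontrivial E] [NormedAddCommGroup F] [NormedSpace ℝ F] [Nontrivial F] (B : ℝ) :
    ∃ (M : E →L[ℝ] F) (w : E), B < ‖M w‖ := by
  obtain ⟨w, hw⟩ := exists_norm_eq E zero_le_one
  obtain ⟨e, he⟩ := exists_norm_eq F (by positivity : 0 ≤ |B| + 1)
  refine ⟨(innerSL ℝ w).smulRight e, w, ?_⟩
  rw [ContinuousLinearMap.smulRight_apply, innerSL_apply_apply, real_inner_self_eq_norm_sq, hw,
    one_pow, one_smul, he]
  linarith [le_abs_self B]

/-- **second part of the paper's Theorem 2.** Under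
condition-dependent (Dirac) sampling measures `μ₁ = δ_a`, `μ₂ = δ_b` on `ℝ^d`,
even when the velocity estimator `v` and its parameter-Jacobian `Dv` are the
same for both conditions (so the output gap `ε` is `0`), the difference of the
loss gradients `Gᵢ = 2 ∫ (Dv(y))^* (v(y) − u(y)) dμᵢ(y)` can be made larger
than any prescribed bound `B`: no bound depending only on `ε` can hold. -/
theorem gradient_difference_unbounded_under_conditional_sampling
    (p d : ℕ) (hp : 0 < p) (hd : 0 < d) :
    ∀ B > (0 : ℝ),
      ∃ (a b : EuclideanSpace ℝ (Fin d))
        (u v : EuclideanSpace ℝ (Fin d) → EuclideanSpace ℝ (Fin d))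
        (Dv : EuclideanSpace ℝ (Fin d) →
          (EuclideanSpace ℝ (Fin p) →L[ℝ] EuclideanSpace ℝ (Fin d)))
        (Cu Cv CD : ℝ),
        Measurable u ∧ (∀ y, ‖u y‖ ≤ Cu) ∧
        Measurable v ∧ (∀ y, ‖v y‖ ≤ Cv) ∧
        StronglyMeasurable Dv ∧ (∀ y, ‖Dv y‖ ≤ CD) ∧
        B < ‖((2 : ℝ) • ∫ y, (ContinuousLinearMap.adjoint (Dv y)) (v y - u y)
                ∂(Measure.dirac a))
            - ((2 : ℝ) • ∫ y, (ContinuousLinearMap.adjoint (Dv y)) (v y - u y)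
                ∂(Measure.dirac b))‖ := by
  intro B _
  have : NeZero p := ⟨hp.ne'⟩
  have : NeZero d := ⟨hd.ne'⟩
  obtain ⟨M, w, hMw⟩ := exists_norm_apply_gt (E := EuclideanSpace ℝ (Fin d))
    (F := EuclideanSpace ℝ (Fin p)) B
  obtain ⟨a, b, hab⟩ := exists_pair_ne (EuclideanSpace ℝ (Fin d))
  set v := ({a} : Set _).indicator fun _ => w
  refine ⟨a, b, 0, v, fun _ => ContinuousLinearMap.adjoint M, 0, ‖w‖,
    ‖ContinuousLinearMap.adjoint M‖, measurable_zero, fun _ => norm_zero.le,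
    measurable_const.indicator (measurableSet_singleton a),
    fun _ => norm_indicator_le_norm_self _ _,
    stronglyMeasurable_const, fun _ => le_rfl, ?_⟩
  change B < ‖lossGradient (Measure.dirac a) 0 v _ - lossGradient (Measure.dirac b) 0 v _‖
  have hva : v a = w := Set.indicator_of_mem (Set.mem_singleton a) _
  have hvb : v b = 0 := Set.indicator_of_notMem (Set.mem_singleton_iff.not.mpr hab.symm) _
  rw [lossGradient_dirac, lossGradient_dirac, hva, hvb, ContinuousLinearMap.adjoint_adjoint]
  simp only [Pi.zero_apply, sub_zero, map_zero, smul_zero, norm_smul, Real.norm_two]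
  linarith [norm_nonneg (M w)]
end

section
/- Let d be a positive integer and let Z be a measurable space with a probability measure q. Let p : ℝ × ℝ^d × Z → ℝ be nonnegative with p(·,·,z) continuously differentiable for q-a.e. z, and let u : ℝ × ℝ^d × Z → ℝ^d be such that each p(t,·,z)·u(t,·,z) is continuously differentiable. Suppose that for q-a.e. z and all (t,x), the conditional continuity equation holds: ∂_t p(t,x,z) = − ∑_{i=1}^d ∂_{x_i} ( p(t,x,z) u_i(t,x,z) ). Define the marginal density p̄(t,x) := ∫_Z p(t,x,z) dq(z), assume p̄(t,x) > 0 for all (t,x), and define the marginal vector field ū(t,x) := ( ∫_Z u(t,x,z) p(t,x,z) dq(z) ) / p̄(t,x). Assume differentiation under the integral sign is valid, i.e. ∂_t ∫_Z p(t,x,z) dq(z) = ∫_Z ∂_t p(t,x,z) dq(z) and ∂_{x_i} ∫_Z p(t,x,z) u_i(t,x,z) dq(z) = ∫_Z ∂_{x_i}( p(t,x,z) u_i(t,x,z) ) dq(z) for each i. Then the marginal pair satisfies the continuity equation: ∂_t p̄(t,x) = − ∑_{i=1}^d ∂_{x_i} ( p̄(t,x) ū_i(t,x) ) for all (t,x).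 -/
/-! Integrate the conditional continuity equation against `q` and move the derivatives
outside the integrals. The marginal flux `p̄ ūᵢ` is exactly `∫ p uᵢ dq`, because the
normalisation `1 / p̄` in `ū` cancels against `p̄`. -/

open MeasureTheory

lemma mul_inv_smul_integral_apply {ι Z : Type*} [Fintype ι] [MeasurableSpace Z]
    {q : Measure Z} {ρ : ℝ} (hρ : ρ ≠ 0) {J : Z → EuclideanSpace ℝ ι}
    (hJ : Integrable J q) (i : ι) :
    ρ * (ρ⁻¹ • ∫ z, J z ∂q) i = ∫ z, J z i ∂q := by
  rw [PiLp.smul_apply, smul_eq_mul, mul_inv_cancel_left₀ hρ,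
    eval_integral_piLp hJ.eval_piLp]

lemma integral_eq_neg_sum_of_ae_eq {ι Z : Type*} [MeasurableSpace Z] {q : Measure Z}
    {s : Finset ι} {f : Z → ℝ} {g : ι → Z → ℝ}
    (hfg : ∀ᵐ z ∂q, f z = - ∑ i ∈ s, g i z) (hg : ∀ i ∈ s, Integrable (g i) q) :
    ∫ z, f z ∂q = - ∑ i ∈ s, ∫ z, g i z ∂q := by
  rw [integral_congr_ae hfg, integral_neg, integral_finsetSum s hg]

theorem marginal_continuity_equation_general
    (d : ℕ)
    {Z : Type*} [MeasurableSpace Z] (q : Measure Z)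
    (p : ℝ → EuclideanSpace ℝ (Fin d) → Z → ℝ)
    (u : ℝ → EuclideanSpace ℝ (Fin d) → Z → EuclideanSpace ℝ (Fin d))
    -- conditional continuity equation, for `q`-a.e. `z`:
    (hcont : ∀ᵐ z ∂q, ∀ t x,
      deriv (fun s => p s x z) t
        = - ∑ i : Fin d,
            fderiv ℝ (fun y => p t y z * u t y z i) x (EuclideanSpace.single i 1))
    -- marginal density and marginal vector field:
    (pbar : ℝ → EuclideanSpace ℝ (Fin d) → ℝ)
    (hpbar : ∀ t x, pbar t x = ∫ z, p t x z ∂q)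
    (hpbar_pos : ∀ t x, 0 < pbar t x)
    (hpu_int : ∀ t x, Integrable (fun z => p t x z • u t x z) q)
    (ubar : ℝ → EuclideanSpace ℝ (Fin d) → EuclideanSpace ℝ (Fin d))
    (hubar : ∀ t x, ubar t x = (pbar t x)⁻¹ • ∫ z, p t x z • u t x z ∂q)
    -- differentiation under the integral sign is valid:
    (hswap_t : ∀ t x,
      deriv (fun s => ∫ z, p s x z ∂q) t = ∫ z, deriv (fun s => p s x z) t ∂q)
    (hswap_x : ∀ t x (i : Fin d),
      fderiv ℝ (fun y => ∫ z, p t y z * u t y z i ∂q) x (EuclideanSpace.single i 1)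
        = ∫ z, fderiv ℝ (fun y => p t y z * u t y z i) x (EuclideanSpace.single i 1) ∂q)
    (hfderiv_int : ∀ t x (i : Fin d),
      Integrable
        (fun z => fderiv ℝ (fun y => p t y z * u t y z i) x (EuclideanSpace.single i 1))
        q) :
    ∀ t x, deriv (fun s => pbar s x) t
      = - ∑ i : Fin d,
          fderiv ℝ (fun y => pbar t y * ubar t y i) x (EuclideanSpace.single i 1) := by
  intro t x
  have flux : ∀ i, (fun y => pbar t y * ubar t y i) = fun y => ∫ z, p t y z * u t y z i ∂q :=
    fun i => funext fun y => by
      rw [hubar, mul_inv_smul_integral_apply (hpbar_pos t y).ne' (hpu_int t y)]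
      simp only [PiLp.smul_apply, smul_eq_mul]
  calc deriv (fun s => pbar s x) t
      = ∫ z, deriv (fun s => p s x z) t ∂q := by simp only [hpbar, hswap_t]
    _ = - ∑ i : Fin d, ∫ z,
          fderiv ℝ (fun y => p t y z * u t y z i) x (EuclideanSpace.single i 1) ∂q :=
        integral_eq_neg_sum_of_ae_eq (hcont.mono fun z hz => hz t x)
          fun i _ => hfderiv_int t x i
    _ = - ∑ i : Fin d,
          fderiv ℝ (fun y => pbar t y * ubar t y i) x (EuclideanSpace.single i 1) := by
        simp only [flux, hswap_x]

/-- If for `q`-a.e. `z` the conditional probability path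
`p(t,·,z)` and conditional vector field `u(t,·,z)` satisfy the continuity
equation `∂_t p = −∑_i ∂_{x_i}(p uᵢ)`, then the marginal density
`p̄(t,x) = ∫_Z p(t,x,z) dq(z)` (assumed strictly positive) and the marginal
vector field `ū(t,x) = (∫_Z u(t,x,z) p(t,x,z) dq(z)) / p̄(t,x)` satisfy the
continuity equation `∂_t p̄ = −∑_i ∂_{x_i}(p̄ ūᵢ)`, provided differentiation
under the integral sign is valid. -/
theorem marginal_continuity_equation
    (d : ℕ) (hd : 0 < d)
    {Z : Type*} [MeasurableSpace Z] (q : Measure Z) [IsProbabilityMeasure q]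
    (p : ℝ → EuclideanSpace ℝ (Fin d) → Z → ℝ)
    (u : ℝ → EuclideanSpace ℝ (Fin d) → Z → EuclideanSpace ℝ (Fin d))
    (hp_nonneg : ∀ t x z, 0 ≤ p t x z)
    (hp_smooth : ∀ᵐ z ∂q,
      ContDiff ℝ 1 (fun tx : ℝ × EuclideanSpace ℝ (Fin d) => p tx.1 tx.2 z))
    (hpu_smooth : ∀ z t, ContDiff ℝ 1 (fun x => p t x z • u t x z))
    -- conditional continuity equation, for `q`-a.e. `z`:
    (hcont : ∀ᵐ z ∂q, ∀ t x,
      deriv (fun s => p s x z) t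
        = - ∑ i : Fin d,
            fderiv ℝ (fun y => p t y z * u t y z i) x (EuclideanSpace.single i 1))
    -- marginal density and marginal vector field:
    (pbar : ℝ → EuclideanSpace ℝ (Fin d) → ℝ)
    (hpbar : ∀ t x, pbar t x = ∫ z, p t x z ∂q)
    (hpbar_pos : ∀ t x, 0 < pbar t x)
    (hpu_int : ∀ t x, Integrable (fun z => p t x z • u t x z) q)
    (ubar : ℝ → EuclideanSpace ℝ (Fin d) → EuclideanSpace ℝ (Fin d))
    (hubar : ∀ t x, ubar t x = (pbar t x)⁻¹ • ∫ z, p t x z • u t x z ∂q)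
    -- differentiation under the integral sign is valid:
    (hswap_t : ∀ t x,
      deriv (fun s => ∫ z, p s x z ∂q) t = ∫ z, deriv (fun s => p s x z) t ∂q)
    (hswap_x : ∀ t x (i : Fin d),
      fderiv ℝ (fun y => ∫ z, p t y z * u t y z i ∂q) x (EuclideanSpace.single i 1)
        = ∫ z, fderiv ℝ (fun y => p t y z * u t y z i) x (EuclideanSpace.single i 1) ∂q)
    (hfderiv_int : ∀ t x (i : Fin d),
      Integrable
        (fun z => fderiv ℝ (fun y => p t y z * u t y z i) x (EuclideanSpace.single i 1))
        q) :
    ∀ t x, deriv (fun s => pbar s x) t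
      = - ∑ i : Fin d,
          fderiv ℝ (fun y => pbar t y * ubar t y i) x (EuclideanSpace.single i 1) :=
  marginal_continuity_equation_general d q p u hcont pbar hpbar hpbar_pos hpu_int ubar hubar hswap_t
    hswap_x hfderiv_int
end
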